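/- arXiv:2504.20269 — 3 statements merged into one kernel-verified Lean document; each statement's English description precedes it below -/
import Mathlib

section
/- Let (X, Σ, μ) be a probability space, let φ : X → X be an invertible measure-preserving map, let F ⊆ L²(X) be a finite-dimensional linear subspace and let ε > 0. Then there exist K₀ ∈ ℕ and δ > 0 such that: whenever T̂ : F → F is a linear operator and K ≥ K₀ is such that ‖T̂^k f − T_φ^k f‖₂ ≤ δ‖f‖₂ holds for all f ∈ F and all k ∈ {0, …, K−1}, then dim(F) ≥ K (h_apr(T_φ, F) − ε). -/
/-!
Write `k = qK + r` with `r < K`. Since `T` is an isometry, `T^k f` lies within `δ‖f‖` of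
`T^{qK} (T̂^r f) ∈ T^{qK} F`. Hence, if `δ‖f‖ < δ'` on a finite `ω ⊆ F`, the first `j` iterates
of `ω` are `δ'`-approximated by `T^0 F + T^K F + ⋯ + T^{⌊j/K⌋K} F`, of dimension at most
`(j/K + 1) dim F`, so `h_apr(T, ω, δ') ≤ dim F / K`. Choosing `ω` and `δ'` with
`h_apr(T, ω, δ') > h_apr(T, F) - ε` and then `δ` small gives the claim. The Koopman operator is
an isometry because `φ` preserves `μ`.
-/

open MeasureTheory

/-- `H_apr(ω, δ)`: the minimal dimension of a finite-dimensional subspace `F ⊆ H` such that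
every `x ∈ ω` is within distance `< δ` of some `y ∈ F`. -/
noncomputable def Hapr {H : Type*} [NormedAddCommGroup H] [InnerProductSpace ℂ H]
    (ω : Set H) (δ : ℝ) : ℕ :=
  sInf {d : ℕ | ∃ F : Submodule ℂ H, FiniteDimensional ℂ ↥F ∧ Module.finrank ℂ ↥F = d ∧
    ∀ x ∈ ω, ∃ y ∈ F, ‖x - y‖ < δ}

/-- `h_apr(T, ω, δ) = lim_{n → ∞} (1/n) H_apr(⋃_{k=0}^{n-1} T^k ω, δ)` (the limit exists by
subadditivity, hence coincides with the limit superior used here). -/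
noncomputable def haprδ {H : Type*} [NormedAddCommGroup H] [InnerProductSpace ℂ H]
    (T : H → H) (ω : Set H) (δ : ℝ) : ℝ :=
  Filter.limsup (fun n : ℕ => (Hapr (⋃ k < n, T^[k] '' ω) δ : ℝ) / n) Filter.atTop

/-- `h_apr(T, ω) = sup_{δ > 0} h_apr(T, ω, δ)`, the approximation entropy of `ω` with
respect to `T`. -/
noncomputable def haprω {H : Type*} [NormedAddCommGroup H] [InnerProductSpace ℂ H]
    (T : H → H) (ω : Set H) : ℝ :=
  ⨆ (δ : ℝ) (_ : 0 < δ), haprδ T ω δ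

/-- `h_apr(T, F)`: the approximation entropy of a subspace `F`, the supremum of `h_apr(T, ω)`
over all finite subsets `ω ⊆ F`. -/
noncomputable def haprSub {H : Type*} [NormedAddCommGroup H] [InnerProductSpace ℂ H]
    (T : H → H) (F : Submodule ℂ H) : ℝ :=
  ⨆ (ω : Finset H) (_ : (ω : Set H) ⊆ (F : Set H)), haprω T (ω : Set H)

open Filter Topology

theorem Submodule.finrank_finset_sup_le {K V ι : Type*} [DivisionRing K] [AddCommGroup V]
    [Module K V] (s : Finset ι) (S : ι → Submodule K V) [∀ i, FiniteDimensional K (S i)] :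
    Module.finrank K ↥(s.sup S) ≤ ∑ i ∈ s, Module.finrank K (S i) := by
  classical
  induction s using Finset.induction_on with
  | empty => simp
  | insert i s hi ih =>
    rw [Finset.sup_insert, Finset.sum_insert hi]
    exact (Submodule.finrank_add_le_finrank_add_finrank _ _).trans (by omega)

theorem limsup_div_le_of_le_mul_add {u : ℕ → ℝ} {c C : ℝ} (hu₀ : ∀ j, 0 ≤ u j)
    (hu : ∀ j, u j ≤ c * j + C) : limsup (fun j => u j / j) atTop ≤ c := by
  have hlim : Tendsto (fun j : ℕ => c + C / j) atTop (𝓝 c) := by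
    simpa using (tendsto_const_div_atTop_nhds_zero_nat C).const_add c
  have hle : (fun j : ℕ => u j / j) ≤ᶠ[atTop] fun j => c + C / j := by
    filter_upwards [eventually_gt_atTop 0] with j hj
    rw [div_le_iff₀ (by positivity), add_mul, div_mul_cancel₀ _ (by positivity)]
    exact hu j
  calc limsup (fun j => u j / j) atTop
      ≤ limsup (fun j : ℕ => c + C / j) atTop :=
        limsup_le_limsup hle
          (isCoboundedUnder_le_of_le _ fun j => div_nonneg (hu₀ j) j.cast_nonneg)
          hlim.isBoundedUnder_le
    _ = c := hlim.limsup_eq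

theorem MeasureTheory.Lp.norm_eq_of_ae_eq_comp {α β E : Type*} [MeasurableSpace α]
    [MeasurableSpace β] [NormedAddCommGroup E] {p : ENNReal} {μ : Measure α} {ν : Measure β}
    {φ : α → β} (hφ : MeasurePreserving φ μ ν) {f : Lp E p ν} {g : Lp E p μ}
    (hg : (g : α → E) =ᵐ[μ] (f : β → E) ∘ φ) : ‖g‖ = ‖f‖ := by
  rw [Lp.norm_def, Lp.norm_def, eLpNorm_congr_ae hg,
    eLpNorm_comp_measurePreserving (Lp.aestronglyMeasurable f) hφ]

-- When `¬p`, the supremum `⨆ _ : p, x` is `sSup ∅ = 0` in `ℝ`, not `⊥`.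
theorem Real.lt_of_lt_ciSup_prop {p : Prop} {x b : ℝ} (hb : 0 ≤ b) (h : b < ⨆ _ : p, x) :
    p ∧ b < x := by
  by_cases hp : p
  · exact ⟨hp, by rwa [ciSup_pos hp] at h⟩
  · rw [ciSup_neg hp, Real.sSup_empty] at h
    exact absurd hb h.not_ge

theorem Finset.exists_pos_forall_mul_norm_lt {E : Type*} [SeminormedAddCommGroup E]
    (s : Finset E) {r : ℝ} (hr : 0 < r) : ∃ δ > 0, ∀ x ∈ s, δ * ‖x‖ < r := by
  have hsmall : ∀ x ∈ s, ∀ᶠ δ in 𝓝[>] (0 : ℝ), δ * ‖x‖ < r := fun x _ =>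
    ((continuous_id.mul continuous_const).tendsto' (0 : ℝ) 0 (by simp)).mono_left
      nhdsWithin_le_nhds |>.eventually (gt_mem_nhds hr)
  exact ((eventually_mem_nhdsWithin (s := Set.Ioi 0)).and
    ((eventually_all_finset s).2 hsmall)).exists

theorem exists_mem_map_pow_norm_sub_le {R E : Type*} [Semiring R] [SeminormedAddCommGroup E]
    [Module R E] {T : E →L[R] E} (hT : ∀ u, ‖T u‖ = ‖u‖)
    {F : Submodule R E} (That : F →ₗ[R] F) {K : ℕ} (hK : 0 < K) {δ : ℝ}
    (hsh : ∀ (f : F) (k : ℕ), k < K → ‖((That ^ k) f : E) - (T ^ k) f‖ ≤ δ * ‖(f : E)‖)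
    (f : F) (k : ℕ) :
    ∃ y ∈ F.map (T ^ (k / K * K)).toLinearMap, ‖T^[k] f - y‖ ≤ δ * ‖(f : E)‖ := by
  have hpow : ∀ n u, ‖(T ^ n) u‖ = ‖u‖ := by
    intro n
    induction n with
    | zero => simp
    | succ n ih => intro u; rw [pow_succ, mul_apply_eq_comp, ih, hT]
  refine ⟨(T ^ (k / K * K)) ((That ^ (k % K)) f), ⟨_, ((That ^ (k % K)) f).2, rfl⟩, ?_⟩
  have hsplit : T^[k] f = (T ^ (k / K * K)) ((T ^ (k % K)) f) := by
    rw [← mul_apply_eq_comp, ← pow_add, Nat.div_add_mod', FunLike.coe_pow_eq_iterate]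
  rw [hsplit, ← map_sub, hpow, norm_sub_rev]
  exact hsh f _ (Nat.mod_lt k hK)

section ApproximationEntropy

variable {H : Type*} [NormedAddCommGroup H] [InnerProductSpace ℂ H]

theorem Hapr_le_finrank {ω : Set H} {δ : ℝ} (E : Submodule ℂ H) [FiniteDimensional ℂ E]
    (hE : ∀ x ∈ ω, ∃ y ∈ E, ‖x - y‖ < δ) : Hapr ω δ ≤ Module.finrank ℂ E :=
  Nat.sInf_le ⟨E, inferInstance, rfl, hE⟩

theorem exists_lt_haprδ_of_lt_haprSub {T : H → H} {F : Submodule ℂ H} {b : ℝ} (hb : 0 ≤ b)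
    (h : b < haprSub T F) :
    ∃ ω : Finset H, (ω : Set H) ⊆ F ∧ ∃ δ > 0, b < haprδ T ω δ := by
  obtain ⟨ω, hω⟩ := exists_lt_of_lt_ciSup h
  obtain ⟨hωF, hω⟩ := Real.lt_of_lt_ciSup_prop hb hω
  obtain ⟨δ, hδ⟩ := exists_lt_of_lt_ciSup hω
  exact ⟨ω, hωF, δ, Real.lt_of_lt_ciSup_prop hb hδ⟩

theorem Hapr_iUnion_iterate_le {T : H →L[ℂ] H} (hT : ∀ u, ‖T u‖ = ‖u‖)
    {F : Submodule ℂ H} [FiniteDimensional ℂ F] (That : F →ₗ[ℂ] F) {K : ℕ} (hK : 0 < K)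
    {δ δ' : ℝ}
    (hsh : ∀ (f : F) (k : ℕ), k < K → ‖((That ^ k) f : H) - (T ^ k) f‖ ≤ δ * ‖(f : H)‖)
    {ω : Set H} (hωF : ω ⊆ F) (hω : ∀ f ∈ ω, δ * ‖f‖ < δ') (j : ℕ) :
    Hapr (⋃ k < j, T^[k] '' ω) δ' ≤ (j / K + 1) * Module.finrank ℂ F := by
  let E := (Finset.range (j / K + 1)).sup fun q => F.map (T ^ (q * K)).toLinearMap
  have hE : ∀ x ∈ ⋃ k < j, T^[k] '' ω, ∃ y ∈ E, ‖x - y‖ < δ' := by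
    simp only [Set.mem_iUnion, Set.mem_image]
    rintro _ ⟨k, hk, w, hw, rfl⟩
    obtain ⟨y, hy, hwy⟩ := exists_mem_map_pow_norm_sub_le hT That hK hsh ⟨w, hωF hw⟩ k
    have hq : k / K ∈ Finset.range (j / K + 1) :=
      Finset.mem_range.2 (Nat.lt_succ_of_le (Nat.div_le_div_right hk.le))
    exact ⟨y, Finset.le_sup (f := fun q => F.map (T ^ (q * K)).toLinearMap) hq hy,
      hwy.trans_lt (hω w hw)⟩
  calc Hapr (⋃ k < j, T^[k] '' ω) δ' ≤ Module.finrank ℂ E := Hapr_le_finrank E hE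
    _ ≤ ∑ q ∈ Finset.range (j / K + 1), Module.finrank ℂ (F.map (T ^ (q * K)).toLinearMap) :=
      Submodule.finrank_finset_sup_le _ _
    _ ≤ ∑ q ∈ Finset.range (j / K + 1), Module.finrank ℂ F :=
      Finset.sum_le_sum fun q _ => Submodule.finrank_map_le _ _
    _ = (j / K + 1) * Module.finrank ℂ F := by simp

theorem haprδ_le_finrank_div {T : H →L[ℂ] H} (hT : ∀ u, ‖T u‖ = ‖u‖)
    {F : Submodule ℂ H} [FiniteDimensional ℂ F] (That : F →ₗ[ℂ] F) {K : ℕ} (hK : 0 < K)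
    {δ δ' : ℝ}
    (hsh : ∀ (f : F) (k : ℕ), k < K → ‖((That ^ k) f : H) - (T ^ k) f‖ ≤ δ * ‖(f : H)‖)
    {ω : Set H} (hωF : ω ⊆ F) (hω : ∀ f ∈ ω, δ * ‖f‖ < δ') :
    haprδ T ω δ' ≤ Module.finrank ℂ F / K := by
  set d := Module.finrank ℂ F
  refine limsup_div_le_of_le_mul_add (C := d) (fun j => Nat.cast_nonneg _) fun j => ?_
  calc (Hapr (⋃ k < j, T^[k] '' ω) δ' : ℝ) ≤ ((j / K + 1) * d : ℕ) :=
        Nat.cast_le.2 (Hapr_iUnion_iterate_le hT That hK hsh hωF hω j)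
    _ = ((j / K : ℕ) : ℝ) * d + d := by push_cast; ring
    _ ≤ (j : ℝ) / K * d + d := by gcongr; exact Nat.cast_div_le
    _ = d / K * j + d := by ring

end ApproximationEntropy

theorem stmt1_general {X : Type*} [MeasurableSpace X] (μ : Measure X)
    (φ : X → X) (hφ : MeasurePreserving φ μ μ)
    (T : Lp ℂ 2 μ →L[ℂ] Lp ℂ 2 μ)
    (hT : ∀ f : Lp ℂ 2 μ, (T f : X → ℂ) =ᵐ[μ] (f : X → ℂ) ∘ φ)
    (F : Submodule ℂ (Lp ℂ 2 μ)) [FiniteDimensional ℂ ↥F] (ε : ℝ) (hε : 0 < ε) :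
    ∃ (K₀ : ℕ) (δ : ℝ), 0 < δ ∧
      ∀ (That : ↥F →ₗ[ℂ] ↥F) (K : ℕ), K₀ ≤ K →
        (∀ (f : ↥F) (k : ℕ), k < K →
          ‖(((That ^ k) f : ↥F) : Lp ℂ 2 μ) - (T ^ k) (f : Lp ℂ 2 μ)‖
            ≤ δ * ‖(f : Lp ℂ 2 μ)‖) →
        (K : ℝ) * (haprSub (⇑T) F - ε) ≤ (Module.finrank ℂ ↥F : ℝ) := by
  have hT_norm : ∀ u, ‖T u‖ = ‖u‖ := fun u => Lp.norm_eq_of_ae_eq_comp hφ (hT u)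
  obtain hle | hpos := le_or_gt (haprSub (⇑T) F - ε) 0
  · exact ⟨0, 1, one_pos, fun _ K _ _ =>
      (mul_nonpos_of_nonneg_of_nonpos K.cast_nonneg hle).trans (Nat.cast_nonneg _)⟩
  obtain ⟨ω, hωF, δ', hδ', hω⟩ := exists_lt_haprδ_of_lt_haprSub hpos.le (sub_lt_self _ hε)
  obtain ⟨δ, hδ, hδω⟩ := ω.exists_pos_forall_mul_norm_lt hδ'
  refine ⟨1, δ, hδ, fun That K hK hsh => ?_⟩
  have hK₀ : (0 : ℝ) < K := by exact_mod_cast hK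
  rw [← le_div_iff₀' hK₀]
  exact hω.le.trans (haprδ_le_finrank_div hT_norm That hK hsh hωF hδω)

/-- Let `(X, Σ, μ)` be a probability space, `φ : X → X` an invertible
measure-preserving map with (unitary) Koopman operator `T = T_φ` on `L²(X)`, let `F ⊆ L²(X)`
be a finite-dimensional subspace and `ε > 0`. Then there exist `K₀ ∈ ℕ` and `δ > 0` such
that: whenever `T̂ : F → F` is linear and `K ≥ K₀` satisfies `‖T̂^k f - T^k f‖₂ ≤ δ ‖f‖₂` for
all `f ∈ F` and `k ∈ {0, …, K-1}`, then `dim F ≥ K (h_apr(T_φ, F) - ε)`. -/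
theorem stmt1 {X : Type*} [MeasurableSpace X] (μ : Measure X) [IsProbabilityMeasure μ]
    (φ : X → X) (hφ : MeasurePreserving φ μ μ)
    (hinv : ∃ ψ : X → X, MeasurePreserving ψ μ μ ∧
      (∀ᵐ x ∂μ, ψ (φ x) = x) ∧ (∀ᵐ x ∂μ, φ (ψ x) = x))
    (T : Lp ℂ 2 μ →L[ℂ] Lp ℂ 2 μ)
    (hT : ∀ f : Lp ℂ 2 μ, (T f : X → ℂ) =ᵐ[μ] (f : X → ℂ) ∘ φ)
    (F : Submodule ℂ (Lp ℂ 2 μ)) [FiniteDimensional ℂ ↥F] (ε : ℝ) (hε : 0 < ε) :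
    ∃ (K₀ : ℕ) (δ : ℝ), 0 < δ ∧
      ∀ (That : ↥F →ₗ[ℂ] ↥F) (K : ℕ), K₀ ≤ K →
        (∀ (f : ↥F) (k : ℕ), k < K →
          ‖(((That ^ k) f : ↥F) : Lp ℂ 2 μ) - (T ^ k) (f : Lp ℂ 2 μ)‖
            ≤ δ * ‖(f : Lp ℂ 2 μ)‖) →
        (K : ℝ) * (haprSub (⇑T) F - ε) ≤ (Module.finrank ℂ ↥F : ℝ) :=
  stmt1_general μ φ hφ T hT F ε hε
end

section
/- Let (X, Σ, μ) be a probability space, let κ ∈ ℕ, p ∈ [1, ∞) and ε > 0. Then there exists δ > 0 such that for any finite Σ-measurable partitions α and β of X with |α| ≤ κ and sup_{A ∈ α} ‖E[1_A | β] − 1_A‖_p < δ, one has H_μ(α | β) < ε. -/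
open MeasureTheory

/-- A finite `Σ`-measurable partition of `X`, given as a finite collection of measurable sets
that are pairwise disjoint and cover `X`. -/
def IsMeasPartition {X : Type*} [MeasurableSpace X] (α : Finset (Set X)) : Prop :=
  (∀ A ∈ α, MeasurableSet A) ∧ ((α : Set (Set X)).PairwiseDisjoint id) ∧
    ⋃ A ∈ α, A = Set.univ

/-- The static entropy `H_μ(α) = ∑_{A ∈ α} -μ(A) log μ(A)` of a finite collection of sets
(sets of measure zero contribute `0`, i.e. are omitted). -/
noncomputable def staticEntropy {X : Type*} [MeasurableSpace X] (μ : MeasureTheory.Measure X)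
    (α : Finset (Set X)) : ℝ :=
  ∑ A ∈ α, Real.negMulLog (μ A).toReal

/-- The conditional expectation `E[f | β] = ∑_{B ∈ β, μ(B) > 0} (1/μ(B)) (∫_B f dμ) · 1_B`
of a function with respect to a finite measurable partition `β` (cells of measure zero are
omitted, since in `ℝ` one has `(0 : ℝ)⁻¹ = 0`). -/
noncomputable def condExpPart {X : Type*} [MeasurableSpace X] (μ : MeasureTheory.Measure X)
    (β : Finset (Set X)) (f : X → ℝ) : X → ℝ :=
  fun x => ∑ B ∈ β, ((μ B).toReal)⁻¹ * (∫ y in B, f y ∂μ) * Set.indicator B 1 x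

/-- The common refinement `α ∨ β = {A ∩ B : A ∈ α, B ∈ β}`. -/
noncomputable def commonRefine {X : Type*} (α β : Finset (Set X)) : Finset (Set X) :=
  @Finset.image _ _ (Classical.decEq _) (fun p : Set X × Set X => p.1 ∩ p.2) (α ×ˢ β)

/-!
Write `c = μ[A | B]` and `η = negMulLog`. Since `η (μ B * c) = c * η (μ B) + μ B * η c`, the
conditional entropy is `H(α | β) = ∑_A ∑_B μ(B) η(c)`. On a cell `B` the function
`E[1_A | β] - 1_A` equals `c - 1_A`, so its absolute value is at least `min c (1 - c)`; hence
`∑_B μ(B) min c (1 - c) ≤ ‖E[1_A | β] - 1_A‖₁ ≤ ‖E[1_A | β] - 1_A‖_p < δ`. As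
`η c ≤ 2 √(min c (1 - c))` on `[0, 1]`, Jensen's inequality for the concave square root bounds the
contribution of each `A` by `2 √δ`, and there are at most `κ` sets `A`.
-/

open ProbabilityTheory Real

namespace Real

lemma negMulLog_le_two_mul_sqrt {c : ℝ} (hc : 0 ≤ c) : negMulLog c ≤ 2 * √c := by
  have hs : 0 ≤ √c := sqrt_nonneg c
  calc negMulLog c = 2 * √c * negMulLog √c := by
        rw [← mul_self_sqrt hc, negMulLog_mul, sqrt_mul_self hs]; ring
    _ ≤ 2 * √c * (1 - √c) := by gcongr; exact negMulLog_le_one_sub_self hs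
    _ ≤ 2 * √c := by nlinarith

lemma negMulLog_le_two_mul_sqrt_min {c : ℝ} (h0 : 0 ≤ c) (h1 : c ≤ 1) :
    negMulLog c ≤ 2 * √(min c (1 - c)) := by
  rcases le_total c (1 - c) with h | h
  · rw [min_eq_left h]; exact negMulLog_le_two_mul_sqrt h0
  · rw [min_eq_right h]
    have hs : 1 - c ≤ √(1 - c) := by
      rw [le_sqrt (by linarith) (by linarith)]; nlinarith
    linarith [negMulLog_le_one_sub_self h0, sqrt_nonneg (1 - c)]

lemma sum_mul_sqrt_le_sqrt_sum_mul {ι : Type*} (s : Finset ι) {w m : ι → ℝ}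
    (hw : ∀ i ∈ s, 0 ≤ w i) (hw₁ : ∑ i ∈ s, w i = 1) (hm : ∀ i ∈ s, 0 ≤ m i) :
    ∑ i ∈ s, w i * √(m i) ≤ √(∑ i ∈ s, w i * m i) :=
  strictConcaveOn_sqrt.concaveOn.le_map_sum hw hw₁ hm

end Real

namespace IsMeasPartition

variable {X : Type*} [MeasurableSpace X] {α : Finset (Set X)}

lemma sum_measure (hα : IsMeasPartition α) (ν : Measure X) : ∑ A ∈ α, ν A = ν Set.univ := by
  rw [← hα.2.2]; exact (measure_biUnion_finset hα.2.1 hα.1).symm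

lemma lintegral_eq_sum (hα : IsMeasPartition α) (μ : Measure X) (f : X → ENNReal) :
    ∫⁻ x, f x ∂μ = ∑ A ∈ α, ∫⁻ x in A, f x ∂μ := by
  rw [← setLIntegral_univ, ← hα.2.2]; exact lintegral_biUnion_finset hα.2.1 hα.1 f

end IsMeasPartition

section

variable {X : Type*} [MeasurableSpace X] {μ : Measure X} {α β : Finset (Set X)}

lemma staticEntropy_commonRefine (hα : (α : Set (Set X)).PairwiseDisjoint id)
    (hβ : (β : Set (Set X)).PairwiseDisjoint id) :
    staticEntropy μ (commonRefine α β) = ∑ A ∈ α, ∑ B ∈ β, negMulLog (μ (A ∩ B)).toReal := by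
  unfold staticEntropy commonRefine
  rw [Finset.sum_image_of_pairwise_eq_zero, Finset.sum_product]
  rintro ⟨A, B⟩ hAB ⟨A', B'⟩ hAB' hne heq
  simp only [Finset.coe_product, Set.mem_prod, Finset.mem_coe] at hAB hAB' heq
  suffices A ∩ B = ∅ by simp [this]
  refine Set.eq_empty_of_forall_notMem fun x hx => hne ?_
  have hx' : x ∈ A' ∩ B' := heq ▸ hx
  rw [hα.elim_set hAB.1 hAB'.1 x hx.1 hx'.1, hβ.elim_set hAB.2 hAB'.2 x hx.2 hx'.2]

lemma toReal_cond_le_one (A B : Set X) : (μ[A | B]).toReal ≤ 1 :=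
  ENNReal.toReal_le_of_le_ofReal zero_le_one (by simpa using prob_le_one)

lemma min_toReal_cond_one_sub_nonneg (A B : Set X) :
    0 ≤ min (μ[A | B]).toReal (1 - (μ[A | B]).toReal) :=
  le_min ENNReal.toReal_nonneg (sub_nonneg.2 (toReal_cond_le_one A B))

lemma sum_toReal_cond_mul_negMulLog [IsFiniteMeasure μ] (hα : IsMeasPartition α) (B : Set X) :
    ∑ A ∈ α, (μ[A | B]).toReal * negMulLog (μ B).toReal = negMulLog (μ B).toReal := by
  rw [← Finset.sum_mul, ← ENNReal.toReal_sum fun _ _ => measure_ne_top _ _,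
    hα.sum_measure]
  rcases eq_or_ne (μ B) 0 with hB | hB
  · simp [hB]
  · have := cond_isProbabilityMeasure hB
    simp

lemma staticEntropy_commonRefine_sub [IsFiniteMeasure μ] (hα : IsMeasPartition α)
    (hβ : IsMeasPartition β) :
    staticEntropy μ (commonRefine α β) - staticEntropy μ β
      = ∑ A ∈ α, ∑ B ∈ β, (μ B).toReal * negMulLog (μ[A | B]).toReal := by
  have hsplit : ∀ A, ∀ B ∈ β, negMulLog (μ (A ∩ B)).toReal
      = (μ[A | B]).toReal * negMulLog (μ B).toReal
        + (μ B).toReal * negMulLog (μ[A | B]).toReal := by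
    intro A B hB
    rw [Set.inter_comm, ← cond_mul_eq_inter (hβ.1 B hB), ENNReal.toReal_mul, mul_comm,
      negMulLog_mul]
  have hβ' :
      staticEntropy μ β = ∑ A ∈ α, ∑ B ∈ β, (μ[A | B]).toReal * negMulLog (μ B).toReal := by
    rw [Finset.sum_comm]
    exact Finset.sum_congr rfl fun B _ => (sum_toReal_cond_mul_negMulLog hα B).symm
  rw [staticEntropy_commonRefine hα.2.1 hβ.2.1, hβ', ← Finset.sum_sub_distrib]
  refine Finset.sum_congr rfl fun A _ => ?_
  rw [← Finset.sum_sub_distrib]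
  exact Finset.sum_congr rfl fun B hB => by rw [hsplit A B hB]; ring

lemma condExpPart_indicator_of_mem (hβ : IsMeasPartition β) {A B : Set X} (hA : MeasurableSet A)
    (hB : B ∈ β) {x : X} (hx : x ∈ B) :
    condExpPart μ β (A.indicator 1) x = (μ[A | B]).toReal := by
  unfold condExpPart
  rw [Finset.sum_eq_single_of_mem B hB, Set.indicator_of_mem hx, setIntegral_indicator hA,
    cond_apply (hβ.1 B hB), ENNReal.toReal_mul, ENNReal.toReal_inv, Set.inter_comm]
  · simp [Measure.real]
  · intro B' hB' hne
    rw [Set.indicator_of_notMem (s := B') fun hx' => hne (hβ.2.1.elim_set hB' hB x hx' hx),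
      mul_zero]

lemma measurable_condExpPart (hβ : ∀ B ∈ β, MeasurableSet B) (f : X → ℝ) :
    Measurable (condExpPart μ β f) :=
  Finset.measurable_sum _ fun B hB =>
    measurable_const.mul (measurable_one.indicator (hβ B hB))

lemma ofReal_sum_measure_mul_min_le_eLpNorm_one [IsFiniteMeasure μ] (hβ : IsMeasPartition β)
    {A : Set X} (hA : MeasurableSet A) :
    ENNReal.ofReal (∑ B ∈ β, (μ B).toReal * min (μ[A | B]).toReal (1 - (μ[A | B]).toReal))
      ≤ eLpNorm (condExpPart μ β (A.indicator 1) - A.indicator 1) 1 μ := by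
  have hmin B := min_toReal_cond_one_sub_nonneg (μ := μ) A B
  rw [eLpNorm_one_eq_lintegral_enorm, hβ.lintegral_eq_sum,
    ENNReal.ofReal_sum_of_nonneg fun B _ => mul_nonneg ENNReal.toReal_nonneg (hmin B)]
  refine Finset.sum_le_sum fun B hB => ?_
  rw [mul_comm, ENNReal.ofReal_mul (hmin B), ENNReal.ofReal_toReal (measure_ne_top μ B),
    ← setLIntegral_const]
  refine setLIntegral_mono
    ((measurable_condExpPart hβ.1 _).sub (measurable_one.indicator hA)).enorm fun x hx => ?_
  rw [Pi.sub_apply, condExpPart_indicator_of_mem hβ hA hB hx, Real.enorm_eq_ofReal_abs]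
  refine ENNReal.ofReal_le_ofReal ?_
  by_cases hxA : x ∈ A
  · rw [Set.indicator_of_mem hxA, Pi.one_apply, abs_sub_comm]
    exact (min_le_right _ _).trans (le_abs_self _)
  · rw [Set.indicator_of_notMem hxA, sub_zero]
    exact (min_le_left _ _).trans (le_abs_self _)

lemma sum_measure_mul_min_lt_of_eLpNorm_lt [IsProbabilityMeasure μ] (hβ : IsMeasPartition β)
    {A : Set X} (hA : MeasurableSet A) {p δ : ℝ} (hp : 1 ≤ p)
    (h : eLpNorm (condExpPart μ β (A.indicator 1) - A.indicator 1) (ENNReal.ofReal p) μ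
      < ENNReal.ofReal δ) :
    ∑ B ∈ β, (μ B).toReal * min (μ[A | B]).toReal (1 - (μ[A | B]).toReal) < δ := by
  have hL1 : eLpNorm (condExpPart μ β (A.indicator 1) - A.indicator 1) 1 μ < ENNReal.ofReal δ :=
    (eLpNorm_le_eLpNorm_of_exponent_le (by simpa using ENNReal.ofReal_le_ofReal hp)
      ((measurable_condExpPart hβ.1 _).sub (measurable_one.indicator hA)).aestronglyMeasurable
      ).trans_lt h
  exact (ENNReal.ofReal_lt_ofReal_iff'.1
    ((ofReal_sum_measure_mul_min_le_eLpNorm_one hβ hA).trans_lt hL1)).1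

lemma sum_measure_mul_negMulLog_cond_le [IsProbabilityMeasure μ] (hβ : IsMeasPartition β)
    (A : Set X) :
    ∑ B ∈ β, (μ B).toReal * negMulLog (μ[A | B]).toReal
      ≤ 2 * √(∑ B ∈ β, (μ B).toReal * min (μ[A | B]).toReal (1 - (μ[A | B]).toReal)) := by
  have hβ₁ : ∑ B ∈ β, (μ B).toReal = 1 := by
    rw [← ENNReal.toReal_sum fun _ _ => measure_ne_top _ _, hβ.sum_measure, measure_univ,
      ENNReal.toReal_one]
  calc ∑ B ∈ β, (μ B).toReal * negMulLog (μ[A | B]).toReal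
      ≤ ∑ B ∈ β, (μ B).toReal * (2 * √(min (μ[A | B]).toReal (1 - (μ[A | B]).toReal))) :=
        Finset.sum_le_sum fun B _ => mul_le_mul_of_nonneg_left
          (negMulLog_le_two_mul_sqrt_min ENNReal.toReal_nonneg (toReal_cond_le_one A B))
          ENNReal.toReal_nonneg
    _ = 2 * ∑ B ∈ β, (μ B).toReal * √(min (μ[A | B]).toReal (1 - (μ[A | B]).toReal)) := by
        rw [Finset.mul_sum]; exact Finset.sum_congr rfl fun B _ => by ring
    _ ≤ 2 * √(∑ B ∈ β, (μ B).toReal * min (μ[A | B]).toReal (1 - (μ[A | B]).toReal)) := by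
        gcongr
        exact sum_mul_sqrt_le_sqrt_sum_mul β (fun _ _ => ENNReal.toReal_nonneg) hβ₁
          fun B _ => min_toReal_cond_one_sub_nonneg A B

end

/-- Let `(X, Σ, μ)` be a probability space, `κ ∈ ℕ`, `p ∈ [1, ∞)` and
`ε > 0`. Then there is `δ > 0` such that for all finite measurable partitions `α`, `β` of `X`
with `|α| ≤ κ` and `sup_{A ∈ α} ‖E[1_A | β] - 1_A‖_p < δ`, one has
`H_μ(α | β) = H_μ(α ∨ β) - H_μ(β) < ε`. -/
theorem stmt5 {X : Type*} [MeasurableSpace X] (μ : Measure X) [IsProbabilityMeasure μ]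
    (κ : ℕ) (p : ℝ) (hp : 1 ≤ p) (ε : ℝ) (hε : 0 < ε) :
    ∃ δ : ℝ, 0 < δ ∧
      ∀ α β : Finset (Set X), IsMeasPartition α → IsMeasPartition β → α.card ≤ κ →
        (∀ A ∈ α,
          eLpNorm (condExpPart μ β (Set.indicator A 1) - Set.indicator A 1)
            (ENNReal.ofReal p) μ < ENNReal.ofReal δ) →
        staticEntropy μ (commonRefine α β) - staticEntropy μ β < ε := by
  refine ⟨(ε / (2 * (κ + 1))) ^ 2, by positivity, fun α β hα hβ hκ hδ => ?_⟩
  have hcell : ∀ A ∈ α, ∑ B ∈ β, (μ B).toReal * negMulLog (μ[A | B]).toReal ≤ ε / (κ + 1) :=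
    fun A hA => calc
      _ ≤ 2 * √(∑ B ∈ β, (μ B).toReal * min (μ[A | B]).toReal (1 - (μ[A | B]).toReal)) :=
        sum_measure_mul_negMulLog_cond_le hβ A
      _ ≤ 2 * √((ε / (2 * (κ + 1))) ^ 2) := by
        gcongr; exact (sum_measure_mul_min_lt_of_eLpNorm_lt hβ (hα.1 A hA) hp (hδ A hA)).le
      _ = ε / (κ + 1) := by rw [sqrt_sq (by positivity)]; field_simp
  rw [staticEntropy_commonRefine_sub hα hβ]
  calc _ ≤ ∑ _A ∈ α, ε / (κ + 1) := Finset.sum_le_sum hcell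
    _ = α.card * (ε / (κ + 1)) := by rw [Finset.sum_const, nsmul_eq_mul]
    _ ≤ κ * (ε / (κ + 1)) := by gcongr
    _ < ε := by rw [← mul_div_assoc, div_lt_iff₀ (by positivity)]; linarith
end

section
/- Let H be a Hilbert space and T : H → H a unitary operator. For every finite-dimensional subspace F ⊆ H and every n ∈ ℕ, the n-th delay subspace Fₙ satisfies h_apr(T, Fₙ) = h_apr(T, F). -/
open MeasureTheory

/-- The `n`-th delay subspace `Fₙ = span ⋃_{k=0}^{n} T^k F`. -/
noncomputable def delaySub {H : Type*} [NormedAddCommGroup H] [InnerProductSpace ℂ H]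
    (T : H → H) (F : Submodule ℂ H) (n : ℕ) : Submodule ℂ H :=
  Submodule.span ℂ (⋃ k ≤ n, T^[k] '' (F : Set H))

/-!
Every vector of `Fₙ` is a sum `∑_{k ≤ n} T^k y_k` with `y_k ∈ F`, and finitely many vectors of `Fₙ`
only involve finitely many such `y_k`, forming a finite `ω' ⊆ F`. Hence the first `m` iterates of
`ω` are approximated to within `(n + 1) δ` by sums of `δ`-approximants of the first `m + n` iterates
of `ω'`, so `H_apr` of the former at scale `(n + 1) δ` is at most `H_apr` of the latter at scale `δ`.
The shift by `n` disappears in the limit of `H_apr / m`, since `H_apr` grows at most linearly.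
This gives `h_apr(T, Fₙ) ≤ h_apr(T, F)`; the reverse inequality holds because `F ⊆ Fₙ`.
-/

open Filter Module Set

lemma exists_finrank_le_mul_iUnion_iterate_image_subset {K V : Type*} [DivisionRing K]
    [AddCommGroup V] [Module K V] (f : Module.End K V) (G : Submodule K V)
    [FiniteDimensional K G] (m : ℕ) :
    ∃ W : Submodule K V, FiniteDimensional K W ∧ finrank K W ≤ m * finrank K G ∧
      ⋃ k < m, (⇑f)^[k] '' G ⊆ W := by
  induction m with
  | zero => exact ⟨⊥, inferInstance, by simp, by simp⟩
  | succ m ih =>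
    obtain ⟨W, _, hW, hsub⟩ := ih
    refine ⟨G ⊔ W.map f, inferInstance, ?_, ?_⟩
    · calc finrank K ↥(G ⊔ W.map f) ≤ finrank K G + finrank K (W.map f) :=
            Submodule.finrank_add_le_finrank_add_finrank _ _
        _ ≤ finrank K G + m * finrank K G :=
            Nat.add_le_add_left ((Submodule.finrank_map_le f W).trans hW) _
        _ = (m + 1) * finrank K G := by ring
    · rintro _ ⟨_, ⟨k, rfl⟩, _, ⟨hk, rfl⟩, y, hy, rfl⟩
      cases k with
      | zero => exact Submodule.mem_sup_left hy
      | succ k =>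
        rw [Function.iterate_succ_apply']
        exact Submodule.mem_sup_right
          (Submodule.mem_map_of_mem (hsub (mem_iUnion₂.2 ⟨k, by omega, y, hy, rfl⟩)))

lemma exists_mem_norm_sum_sub_lt {R E ι : Type*} [Semiring R] [SeminormedAddCommGroup E]
    [Module R E] {W : Submodule R E} {s : Finset ι} (hs : s.Nonempty) {u : ι → E} {δ : ℝ}
    (hu : ∀ k ∈ s, ∃ w ∈ W, ‖u k - w‖ < δ) : ∃ w ∈ W, ‖∑ k ∈ s, u k - w‖ < s.card * δ := by
  choose! w hwW hw using hu
  refine ⟨∑ k ∈ s, w k, Submodule.sum_mem W hwW, ?_⟩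
  calc ‖∑ k ∈ s, u k - ∑ k ∈ s, w k‖ = ‖∑ k ∈ s, (u k - w k)‖ := by rw [Finset.sum_sub_distrib]
    _ ≤ ∑ k ∈ s, ‖u k - w k‖ := norm_sum_le _ _
    _ < ∑ _k ∈ s, δ := Finset.sum_lt_sum_of_nonempty hs hw
    _ = s.card * δ := by rw [Finset.sum_const, nsmul_eq_mul]

lemma limsup_div_le_limsup_div_of_le_shift {a b : ℕ → ℝ} {C : ℝ} (c : ℕ) (hC : 0 ≤ C)
    (ha : ∀ m, 0 ≤ a m) (hab : ∀ m, a m ≤ b (m + c)) (hb : ∀ m, b m ≤ m * C) :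
    limsup (fun m => a m / m) atTop ≤ limsup (fun m => b m / m) atTop := by
  have hbC : ∀ m, b m / m ≤ C := fun m =>
    div_le_of_le_mul₀ m.cast_nonneg hC (by linarith [hb m])
  refine le_of_forall_pos_le_add fun ε hε => ?_
  have hb_lt : ∀ᶠ m in atTop, b (m + c) / ↑(m + c) < limsup (fun m => b m / m) atTop + ε / 2 :=
    (tendsto_add_atTop_nat c).eventually
      (eventually_lt_of_limsup_lt (by linarith) (isBoundedUnder_of ⟨C, hbC⟩))
  have hshift : ∀ᶠ m : ℕ in atTop, C * c / m < ε / 2 :=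
    (tendsto_const_div_atTop_nhds_zero_nat (C * c)).eventually (gt_mem_nhds (by linarith))
  refine limsup_le_of_le (isCoboundedUnder_le_of_le atTop fun m => div_nonneg (ha m) m.cast_nonneg) ?_
  filter_upwards [hb_lt, hshift, eventually_gt_atTop 0] with m hb_lt hshift hm
  have hm : (0 : ℝ) < m := Nat.cast_pos.2 hm
  have hmc : (0 : ℝ) < m + c := by positivity
  calc a m / m ≤ b (m + c) / m := by gcongr; exact hab m
    _ = b (m + c) / ↑(m + c) + b (m + c) / ↑(m + c) * c / m := by push_cast; field_simp
    _ ≤ b (m + c) / ↑(m + c) + C * c / m := by gcongr; exact hbC _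
    _ ≤ _ := by linarith

section Approximation

variable {H : Type*} [NormedAddCommGroup H] [InnerProductSpace ℂ H]

lemma Hapr_le_finrank_s9 {ω : Set H} {δ : ℝ} (hδ : 0 < δ) {G : Submodule ℂ H}
    [FiniteDimensional ℂ G] (hω : ω ⊆ G) : Hapr ω δ ≤ finrank ℂ G :=
  Nat.sInf_le ⟨G, ‹_›, rfl, fun x hx => ⟨x, hω hx, by simpa using hδ⟩⟩

lemma exists_finrank_eq_Hapr {ω : Set H} (hω : ω.Finite) {δ : ℝ} (hδ : 0 < δ) :
    ∃ W : Submodule ℂ H, FiniteDimensional ℂ W ∧ finrank ℂ W = Hapr ω δ ∧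
      ∀ x ∈ ω, ∃ y ∈ W, ‖x - y‖ < δ := by
  have hne : {d : ℕ | ∃ W : Submodule ℂ H, FiniteDimensional ℂ W ∧ finrank ℂ W = d ∧
      ∀ x ∈ ω, ∃ y ∈ W, ‖x - y‖ < δ}.Nonempty :=
    ⟨_, Submodule.span ℂ ω, FiniteDimensional.span_of_finite ℂ hω, rfl,
      fun x hx => ⟨x, Submodule.subset_span hx, by simpa using hδ⟩⟩
  exact Nat.sInf_mem hne

lemma Hapr_iUnion_iterate_image_le (f : Module.End ℂ H) {G : Submodule ℂ H}
    [FiniteDimensional ℂ G] {ω : Set H} (hω : ω ⊆ G) {δ : ℝ} (hδ : 0 < δ) (m : ℕ) :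
    Hapr (⋃ k < m, (⇑f)^[k] '' ω) δ ≤ m * finrank ℂ G := by
  obtain ⟨W, _, hW, hsub⟩ := exists_finrank_le_mul_iUnion_iterate_image_subset f G m
  exact (Hapr_le_finrank_s9 hδ ((iUnion₂_mono fun k _ => image_mono hω).trans hsub)).trans hW

lemma Hapr_iUnion_iterate_image_le_of_forall_eq_sum (f : Module.End ℂ H) {ω ω' : Set H}
    (hω' : ω'.Finite) {δ : ℝ} (hδ : 0 < δ) {n : ℕ}
    (hdec : ∀ x ∈ ω, ∃ y : ℕ → H, (∀ k ≤ n, y k ∈ ω') ∧ x = ∑ k ∈ Finset.Iic n, (f ^ k) (y k))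
    (m : ℕ) :
    Hapr (⋃ j < m, (⇑f)^[j] '' ω) ((n + 1) * δ) ≤ Hapr (⋃ j < m + n, (⇑f)^[j] '' ω') δ := by
  have hfin : (⋃ j < m + n, (⇑f)^[j] '' ω').Finite :=
    (finite_lt_nat _).biUnion fun j _ => hω'.image _
  obtain ⟨W, hW, hWrank, hWapprox⟩ := exists_finrank_eq_Hapr hfin hδ
  refine Nat.sInf_le ⟨W, hW, hWrank, ?_⟩
  rintro _ ⟨_, ⟨j, rfl⟩, _, ⟨hj, rfl⟩, x, hx, rfl⟩
  obtain ⟨y, hyω', rfl⟩ := hdec x hx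
  have hterm : ∀ k ∈ Finset.Iic n, ∃ w ∈ W, ‖(f ^ (j + k)) (y k) - w‖ < δ := fun k hk =>
    have hk : k ≤ n := Finset.mem_Iic.1 hk
    hWapprox _ (mem_iUnion₂.2 ⟨j + k, by omega, y k, hyω' k hk, by rw [Module.End.coe_pow]⟩)
  have hsum : (⇑f)^[j] (∑ k ∈ Finset.Iic n, (f ^ k) (y k)) =
      ∑ k ∈ Finset.Iic n, (f ^ (j + k)) (y k) := by
    simp only [← Module.End.coe_pow, map_sum, ← Module.End.mul_apply, ← pow_add]
  simpa [hsum] using exists_mem_norm_sum_sub_lt Finset.nonempty_Iic hterm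

lemma haprδ_nonneg (T : H → H) (ω : Set H) (δ : ℝ) : 0 ≤ haprδ T ω δ := by
  rw [haprδ, limsup_eq]
  exact Real.sInf_nonneg fun x hx =>
    let ⟨_, hm⟩ := hx.exists
    (div_nonneg (Nat.cast_nonneg _) (Nat.cast_nonneg _)).trans hm

lemma haprω_nonneg (T : H → H) (ω : Set H) : 0 ≤ haprω T ω :=
  Real.iSup_nonneg fun δ => Real.iSup_nonneg fun _ => haprδ_nonneg T ω δ

lemma haprSub_nonneg (T : H → H) (G : Submodule ℂ H) : 0 ≤ haprSub T G :=
  Real.iSup_nonneg fun ω => Real.iSup_nonneg fun _ => haprω_nonneg T ω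

section Bounds

variable (f : Module.End ℂ H) {G : Submodule ℂ H} [FiniteDimensional ℂ G] {ω : Set H}

lemma haprδ_le_finrank (hω : ω ⊆ G) {δ : ℝ} (hδ : 0 < δ) : haprδ ⇑f ω δ ≤ finrank ℂ G :=
  limsup_le_of_le (isCoboundedUnder_le_of_le atTop fun m => by positivity) <|
    Eventually.of_forall fun m => div_le_of_le_mul₀ m.cast_nonneg (Nat.cast_nonneg _) <| by
      rw [mul_comm]; exact_mod_cast Hapr_iUnion_iterate_image_le f hω hδ m

lemma iSup_haprδ_le_finrank (hω : ω ⊆ G) (δ : ℝ) :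
    ⨆ _ : 0 < δ, haprδ ⇑f ω δ ≤ finrank ℂ G :=
  Real.iSup_le (fun hδ => haprδ_le_finrank f hω hδ) (Nat.cast_nonneg _)

lemma haprω_le_finrank (hω : ω ⊆ G) : haprω ⇑f ω ≤ finrank ℂ G :=
  ciSup_le (iSup_haprδ_le_finrank f hω)

lemma haprδ_le_haprω (hω : ω ⊆ G) {δ : ℝ} (hδ : 0 < δ) : haprδ ⇑f ω δ ≤ haprω ⇑f ω :=
  le_ciSup_of_le ⟨_, forall_mem_range.2 (iSup_haprδ_le_finrank f hω)⟩ δ (by rw [ciSup_pos hδ])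

end Bounds

lemma le_haprSub {T : H → H} {G : Submodule ℂ H} {B : ℝ}
    (hB : ∀ ω : Finset H, (ω : Set H) ⊆ G → haprω T ω ≤ B) {ω : Finset H} (hω : (ω : Set H) ⊆ G) :
    haprω T ω ≤ haprSub T G :=
  le_ciSup_of_le ⟨B, forall_mem_range.2 fun ω' =>
    Real.iSup_le (hB ω') ((haprω_nonneg T _).trans (hB ∅ (by simp)))⟩ ω (by rw [ciSup_pos hω])

lemma haprδ_le_of_forall_eq_sum (f : Module.End ℂ H) {G : Submodule ℂ H} [FiniteDimensional ℂ G]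
    {ω ω' : Set H} (hω' : ω'.Finite) (hω'G : ω' ⊆ G) {δ : ℝ} (hδ : 0 < δ) {n : ℕ}
    (hdec : ∀ x ∈ ω, ∃ y : ℕ → H, (∀ k ≤ n, y k ∈ ω') ∧ x = ∑ k ∈ Finset.Iic n, (f ^ k) (y k)) :
    haprδ ⇑f ω ((n + 1) * δ) ≤ haprδ ⇑f ω' δ :=
  limsup_div_le_limsup_div_of_le_shift n (Nat.cast_nonneg (finrank ℂ G))
    (fun _ => Nat.cast_nonneg _)
    (fun m => by exact_mod_cast Hapr_iUnion_iterate_image_le_of_forall_eq_sum f hω' hδ hdec m)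
    (fun m => by exact_mod_cast Hapr_iUnion_iterate_image_le f hω'G hδ m)

lemma haprω_le_of_forall_eq_sum (f : Module.End ℂ H) {G : Submodule ℂ H} [FiniteDimensional ℂ G]
    {ω ω' : Set H} (hω' : ω'.Finite) (hω'G : ω' ⊆ G) {n : ℕ}
    (hdec : ∀ x ∈ ω, ∃ y : ℕ → H, (∀ k ≤ n, y k ∈ ω') ∧ x = ∑ k ∈ Finset.Iic n, (f ^ k) (y k)) :
    haprω ⇑f ω ≤ haprω ⇑f ω' := by
  refine ciSup_le fun δ => Real.iSup_le (fun hδ => ?_) (haprω_nonneg _ _)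
  have hδ' : 0 < δ / (n + 1) := by positivity
  calc haprδ ⇑f ω δ = haprδ ⇑f ω ((n + 1) * (δ / (n + 1))) := by
        rw [mul_div_cancel₀ _ (by positivity)]
    _ ≤ haprδ ⇑f ω' (δ / (n + 1)) := haprδ_le_of_forall_eq_sum f hω' hω'G hδ' hdec
    _ ≤ haprω ⇑f ω' := haprδ_le_haprω f hω'G hδ'

end Approximation

section DelaySubspace

variable {H : Type*} [NormedAddCommGroup H] [InnerProductSpace ℂ H]

lemma subset_delaySub (T : H → H) (F : Submodule ℂ H) (n : ℕ) :
    (F : Set H) ⊆ delaySub T F n :=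
  fun x hx => Submodule.subset_span (mem_iUnion₂.2 ⟨0, Nat.zero_le n, x, hx, rfl⟩)

variable (f : Module.End ℂ H) (F : Submodule ℂ H) (n : ℕ)

lemma delaySub_eq_iSup : delaySub ⇑f F n = ⨆ k ∈ Finset.Iic n, F.map (f ^ k) := by
  simp only [delaySub, Finset.mem_Iic, Submodule.span_iUnion₂, ← Module.End.coe_pow,
    ← Submodule.map_coe, Submodule.span_eq]

lemma exists_eq_sum_of_mem_delaySub {x : H} (hx : x ∈ delaySub ⇑f F n) :
    ∃ y : ℕ → H, (∀ k, y k ∈ F) ∧ x = ∑ k ∈ Finset.Iic n, (f ^ k) (y k) := by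
  rw [delaySub_eq_iSup, Submodule.mem_iSup_finset_iff_exists_sum] at hx
  obtain ⟨μ, rfl⟩ := hx
  choose y hyF hy using fun k => Submodule.mem_map.1 (μ k).2
  exact ⟨y, hyF, by simp only [hy]⟩

lemma exists_finset_forall_eq_sum (ω : Finset H) (hω : (ω : Set H) ⊆ delaySub ⇑f F n) :
    ∃ ω' : Finset H, (ω' : Set H) ⊆ F ∧ ∀ x ∈ (ω : Set H), ∃ y : ℕ → H,
      (∀ k ≤ n, y k ∈ (ω' : Set H)) ∧ x = ∑ k ∈ Finset.Iic n, (f ^ k) (y k) := by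
  classical
  choose y hyF hy using fun x : ω => exists_eq_sum_of_mem_delaySub f F n (hω x.2)
  refine ⟨Finset.image₂ y ω.attach (Finset.Iic n), ?_,
    fun x hx => ⟨y ⟨x, hx⟩, fun k hk => ?_, hy ⟨x, hx⟩⟩⟩
  · intro z hz
    obtain ⟨x, -, k, -, rfl⟩ := Finset.mem_image₂.1 hz
    exact hyF x k
  · exact Finset.mem_image₂.2 ⟨⟨x, hx⟩, Finset.mem_attach _ _, k, Finset.mem_Iic.2 hk, rfl⟩

variable [FiniteDimensional ℂ F]

lemma haprω_le_haprSub_of_subset_delaySub {ω : Finset H} (hω : (ω : Set H) ⊆ delaySub ⇑f F n) :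
    haprω ⇑f ω ≤ haprSub ⇑f F := by
  obtain ⟨ω', hω'F, hdec⟩ := exists_finset_forall_eq_sum f F n ω hω
  exact (haprω_le_of_forall_eq_sum f ω'.finite_toSet hω'F hdec).trans
    (le_haprSub (fun _ hω => haprω_le_finrank f hω) hω'F)

lemma haprSub_delaySub_le : haprSub ⇑f (delaySub ⇑f F n) ≤ haprSub ⇑f F :=
  Real.iSup_le (fun _ => Real.iSup_le (haprω_le_haprSub_of_subset_delaySub f F n)
    (haprSub_nonneg _ _)) (haprSub_nonneg _ _)

lemma haprSub_le_haprSub_delaySub : haprSub ⇑f F ≤ haprSub ⇑f (delaySub ⇑f F n) :=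
  Real.iSup_le (fun _ => Real.iSup_le (fun hω =>
    le_haprSub (fun _ => haprω_le_haprSub_of_subset_delaySub f F n)
      (hω.trans (subset_delaySub _ F n))) (haprSub_nonneg _ _)) (haprSub_nonneg _ _)

end DelaySubspace

theorem stmt9_general {H : Type*} [NormedAddCommGroup H] [InnerProductSpace ℂ H]
    (T : H ≃ₗᵢ[ℂ] H) (F : Submodule ℂ H) [FiniteDimensional ℂ ↥F] (n : ℕ) :
    haprSub (⇑T) (delaySub (⇑T) F n) = haprSub (⇑T) F :=
  le_antisymm (haprSub_delaySub_le (T.toLinearEquiv : H →ₗ[ℂ] H) F n)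
    (haprSub_le_haprSub_delaySub (T.toLinearEquiv : H →ₗ[ℂ] H) F n)

/-- For a unitary operator `T` on a Hilbert space `H`, every finite-dimensional
subspace `F ⊆ H` and every `n ∈ ℕ`, the `n`-th delay subspace `Fₙ` satisfies
`h_apr(T, Fₙ) = h_apr(T, F)`. -/
theorem stmt9 {H : Type*} [NormedAddCommGroup H] [InnerProductSpace ℂ H] [CompleteSpace H]
    (T : H ≃ₗᵢ[ℂ] H) (F : Submodule ℂ H) [FiniteDimensional ℂ ↥F] (n : ℕ) :
    haprSub (⇑T) (delaySub (⇑T) F n) = haprSub (⇑T) F :=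
  stmt9_general T F n
end
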